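/- arXiv:math/0211169 — 4 statements merged into one kernel-verified Lean document; each statement's English description precedes it below -/
import Mathlib

section
/- In the braid group B_3, a word that contains only the letters σ_1, σ_2^{±1} but never σ_1^{-1} and that contains at least one letter σ_1 (a σ_1-positive word) cannot represent the same element of B_3 as a word containing only σ_1^{-1}, σ_2^{±1} but never σ_1 with at least one σ_1^{-1} (a σ_1-negative word). -/
/-- The braid relations on `m` generators `σ_0, …, σ_{m-1}` (0-based indexing). -/
def braidRels (m : ℕ) : Set (FreeGroup (Fin m)) :=
  {r | (∃ i j : Fin m, (i : ℕ) + 1 = (j : ℕ) ∧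
          r = FreeGroup.of i * FreeGroup.of j * FreeGroup.of i *
              (FreeGroup.of j * FreeGroup.of i * FreeGroup.of j)⁻¹) ∨
       (∃ i j : Fin m, (i : ℕ) + 2 ≤ (j : ℕ) ∧
          r = FreeGroup.of i * FreeGroup.of j * (FreeGroup.of i * FreeGroup.of j)⁻¹)}

/-- The braid group `B_n`, with Artin generators indexed (0-based) by `Fin (n-1)`. -/
abbrev BraidGroup (n : ℕ) := PresentedGroup (braidRels (n - 1))

/-- The Artin generator `σ_{i+1}` in 1-based notation, i.e. the `i`-th generator 0-based;
returns `1` for out-of-range indices. -/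
def braidGen (n i : ℕ) : BraidGroup n :=
  if h : i < n - 1 then PresentedGroup.of ⟨i, h⟩ else 1

/-- Evaluation of a word: a letter `(i, true)` is `σ_i` (0-based) and `(i, false)` is `σ_i⁻¹`. -/
def evalWord (n : ℕ) (w : List (ℕ × Bool)) : BraidGroup n :=
  (w.map fun p => if p.2 then braidGen n p.1 else (braidGen n p.1)⁻¹).prod

/-- `k`-fold concatenation (power) of a word. -/
def wpow (u : List (ℕ × Bool)) (k : ℕ) : List (ℕ × Bool) :=
  (List.replicate k u).flatten

/-- The semicircular word `σ_i^ε σ_{i±1}^ε ⋯ σ_j^ε` (0-based indices, `true` = positive sign). -/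
def semiWord (i j : ℕ) (ε : Bool) : List (ℕ × Bool) :=
  if i ≤ j then (List.range (j - i + 1)).map fun t => (i + t, ε)
  else (List.range (i - j + 1)).map fun t => (i - t, ε)

/-- The semicircular move as an element of the braid group. -/
def semiMove (n i j : ℕ) (ε : Bool) : BraidGroup n := evalWord n (semiWord i j ε)

/-- Letter `σ_1` of `B_3` (0-based index 0). -/
def A : ℕ × Bool := (0, true)
/-- Letter `σ_1⁻¹`. -/
def A' : ℕ × Bool := (0, false)
/-- Letter `σ_2`. -/
def B : ℕ × Bool := (1, true)
/-- Letter `σ_2⁻¹`. -/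
def B' : ℕ × Bool := (1, false)

/-- A word in the letters `σ_1^{±1}, σ_2^{±1}` of `B_3`. -/
def ValidWord3 (w : List (ℕ × Bool)) : Prop := ∀ l ∈ w, l.1 < 2

/-- A word is geodesic if no strictly shorter word in the generators `σ_1^{±1}, σ_2^{±1}`
represents the same element of `B_3`. -/
def Geodesic3 (w : List (ℕ × Bool)) : Prop :=
  ∀ w', ValidWord3 w' → evalWord 3 w' = evalWord 3 w → w.length ≤ w'.length

/-- A `σ_1`-positive word: contains `σ_1` but never `σ_1⁻¹`. -/
def SigmaOnePos (w : List (ℕ × Bool)) : Prop := ValidWord3 w ∧ A ∈ w ∧ A' ∉ w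

/-- A `σ_1`-negative word: contains `σ_1⁻¹` but never `σ_1`. -/
def SigmaOneNeg (w : List (ℕ × Bool)) : Prop := ValidWord3 w ∧ A' ∈ w ∧ A ∉ w

/-!
Let `B₃` act on the free group `F(x, y)` by `σ₁ : x ↦ xy, y ↦ y` and `σ₂ : x ↦ x, y ↦ yx⁻¹`,
and let `S` be the set of elements whose reduced word begins with `xy`. The automorphisms `σ₂^{±1}`
fix `x` and preserve `S`, while `σ₁` maps `S ∪ {x}` into `S`. Hence a braid given by a
`σ₁`-positive word sends `x` into `S`, so it is not trivial, as `x ∉ S`. If a `σ₁`-positive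
word `w` and a `σ₁`-negative word `w'` were equal in `B₃`, the `σ₁`-positive word `w w'⁻¹`
would represent `1`.

Cancellations are controlled by counting letters: an automorphism fixing `a` and sending `b` to
`b` times a power of `a` cannot increase, nor (applied to its inverse) decrease, the number of
`b`-letters of reduced words. So no `b`-letter cancels in the image of a reduced word, and a
reduced word beginning with `b` has an image beginning with `b`.
-/

namespace FreeGroup

variable {α : Type*}

theorem mk_singleton (l : α × Bool) : mk [l] = if l.2 then of l.1 else (of l.1)⁻¹ := by
  rcases l with ⟨a, _ | _⟩ <;> simp [of, inv_mk, invRev]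

variable [DecidableEq α]

def letterCount (b : α) (g : FreeGroup α) : ℕ := g.toWord.countP (·.1 = b)

theorem letterCount_mul_le (b : α) (g h : FreeGroup α) :
    letterCount b (g * h) ≤ letterCount b g + letterCount b h := by
  simpa [letterCount] using (toWord_mul_sublist g h).countP_le (p := fun l => l.1 = b)

@[simp]
theorem letterCount_inv (b : α) (g : FreeGroup α) : letterCount b g⁻¹ = letterCount b g := by
  simp [letterCount, toWord_inv, invRev, List.countP_map, Function.comp_def]

theorem letterCount_mk_singleton (b : α) (l : α × Bool) :
    letterCount b (mk [l]) = if l.1 = b then 1 else 0 := by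
  simp [letterCount, toWord_mk, List.countP_cons]

theorem letterCount_map_le {b : α} (φ : FreeGroup α →* FreeGroup α)
    (hφ : ∀ c, letterCount b (φ (of c)) ≤ letterCount b (of c)) (g : FreeGroup α) :
    letterCount b (φ g) ≤ letterCount b g := by
  suffices ∀ L : List (α × Bool), letterCount b (φ (mk L)) ≤ L.countP (·.1 = b) by
    have := this g.toWord
    rwa [mk_toWord] at this
  intro L
  induction L with
  | nil => simp [letterCount, ← one_eq_mk]
  | cons l L ih =>
    have hl : letterCount b (φ (mk [l])) ≤ if l.1 = b then 1 else 0 := by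
      rw [← letterCount_mk_singleton, mk_singleton]
      split_ifs <;> simpa using hφ l.1
    rw [← List.singleton_append, ← mul_mk, _root_.map_mul, List.countP_append]
    refine (letterCount_mul_le b _ _).trans (Nat.add_le_add ?_ ih)
    simpa [List.countP_cons] using hl

theorem letterCount_map_eq {b : α} (φ : MulAut (FreeGroup α))
    (hφ : ∀ c, letterCount b (φ (of c)) ≤ letterCount b (of c))
    (hφ' : ∀ c, letterCount b (φ.symm (of c)) ≤ letterCount b (of c)) (g : FreeGroup α) :
    letterCount b (φ g) = letterCount b g := by
  refine le_antisymm (letterCount_map_le φ.toMonoidHom hφ g) ?_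
  simpa using letterCount_map_le φ.symm.toMonoidHom hφ' (φ g)

theorem toWord_mk_singleton_mul (l : α × Bool) (g : FreeGroup α) :
    (mk [l] * g).toWord =
      if g.toWord.head? = some (l.1, !l.2) then g.toWord.tail else l :: g.toWord := by
  rw [toWord_mul, toWord_mk, reduce_singleton, List.singleton_append, reduce.cons, reduce_toWord]
  rcases g.toWord with _ | ⟨m, t⟩
  · simp
  · rcases l with ⟨a, s⟩
    rcases m with ⟨c, u⟩
    obtain rfl | hac := eq_or_ne a c
    · cases s <;> cases u <;> simp
    · cases s <;> cases u <;> simp [hac, hac.symm]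

theorem toWord_mk_singleton_mul_of_head?_ne {l : α × Bool} {g : FreeGroup α}
    (h : g.toWord.head? ≠ some (l.1, !l.2)) : (mk [l] * g).toWord = l :: g.toWord := by
  rw [toWord_mk_singleton_mul, if_neg h]

theorem head?_ne_of_toWord_eq_cons {l : α × Bool} {g : FreeGroup α} {t : List (α × Bool)}
    (h : g.toWord = l :: t) : t.head? ≠ some (l.1, !l.2) := by
  have hred := h ▸ isReduced_toWord (x := g)
  rcases t with _ | ⟨m, t⟩
  · simp
  · rcases l with ⟨a, s⟩
    have := (isReduced_cons_cons.mp hred).1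
    intro hm
    simp only [List.head?_cons, Option.some.injEq] at hm
    subst hm
    simp at this

theorem eq_mk_singleton_mul_of_toWord_eq_cons {l : α × Bool} {g : FreeGroup α}
    {t : List (α × Bool)} (h : g.toWord = l :: t) : g = mk [l] * mk t ∧ (mk t).toWord = t := by
  refine ⟨by rw [mul_mk, List.singleton_append, ← h, mk_toWord], ?_⟩
  rw [toWord_mk]
  exact (isReduced_toWord.infix (h ▸ List.suffix_cons l t).isInfix).reduce_eq

theorem toWord_mk_singleton_mul_of_letterCount_lt {l : α × Bool} {g : FreeGroup α}
    (h : letterCount l.1 g < letterCount l.1 (mk [l] * g)) :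
    (mk [l] * g).toWord = l :: g.toWord := by
  simp only [letterCount, toWord_mk_singleton_mul] at h ⊢
  split_ifs at h ⊢ with hg
  · rcases hw : g.toWord with _ | ⟨m, t⟩ <;> simp [hw, List.countP_cons] at hg h
  · rfl

theorem toWord_map_of_toWord_eq_cons {F : Type*} [FunLike F (FreeGroup α) (FreeGroup α)]
    [MonoidHomClass F (FreeGroup α) (FreeGroup α)] {b : α} {s : Bool} {φ : F}
    (hφ : ∀ g, letterCount b (φ g) = letterCount b g) {c d : FreeGroup α}
    (hc : letterCount b c = 0) (hd : letterCount b d = 0)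
    (hφb : φ (mk [(b, s)]) = c * mk [(b, s)] * d)
    {g : FreeGroup α} {t : List (α × Bool)} (hg : g.toWord = (b, s) :: t) :
    (c⁻¹ * φ g).toWord = (b, s) :: (d * φ (mk t)).toWord := by
  -- `c⁻¹ * φ g` has as many `b`-letters as `g`, one more than `d * φ (mk t)`,
  -- so its leading letter `(b, s)` cannot cancel.
  obtain ⟨rfl, ht⟩ := eq_mk_singleton_mul_of_toWord_eq_cons hg
  have key : c⁻¹ * φ (mk [(b, s)] * mk t) = mk [(b, s)] * (d * φ (mk t)) := by
    rw [_root_.map_mul, hφb]; group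
  rw [key]
  apply toWord_mk_singleton_mul_of_letterCount_lt
  have hle := letterCount_mul_le b d (φ (mk t))
  have hge := letterCount_mul_le b c (c⁻¹ * φ (mk [(b, s)] * mk t))
  have hg_count : letterCount b (mk [(b, s)] * mk t) = t.countP (·.1 = b) + 1 := by
    rw [letterCount, hg, List.countP_cons]
    simp
  have ht_count : letterCount b (mk t) = t.countP (·.1 = b) := by rw [letterCount, ht]
  rw [mul_inv_cancel_left, hφ, hc, key] at hge
  rw [hφ, hd] at hle
  dsimp only
  omega

end FreeGroup

section ListProd

variable {M X : Type*} [Monoid M] [MulAction M X]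

theorem Set.MapsTo.list_prod_smul {l : List M} {s : Set X}
    (h : ∀ f ∈ l, Set.MapsTo (f • ·) s s) : Set.MapsTo (l.prod • ·) s s := by
  refine List.prod_induction (fun m : M => Set.MapsTo (m • ·) s s) ?_ ?_ h
  · intro a b ha hb
    simpa [Function.comp_def, mul_smul] using ha.comp hb
  · exact fun x hx => by simpa using hx

theorem Set.MapsTo.list_prod_smul_of_mem {l : List M} {s t : Set X}
    (hs : ∀ f ∈ l, Set.MapsTo (f • ·) s s) (ht : ∀ f ∈ l, Set.MapsTo (f • ·) t t) {f : M}
    (hf : f ∈ l) (hts : Set.MapsTo (f • ·) t s) : Set.MapsTo (l.prod • ·) t s := by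
  obtain ⟨l₁, l₂, rfl⟩ := List.append_of_mem hf
  have h₁ := Set.MapsTo.list_prod_smul fun g hg => hs g (List.mem_append_left _ hg)
  have h₂ : Set.MapsTo (l₂.prod • ·) t t :=
    Set.MapsTo.list_prod_smul fun g hg => ht g (by simp [hg])
  simpa [Function.comp_def, mul_smul, mul_assoc] using h₁.comp (hts.comp h₂)

end ListProd

namespace Braid3

open FreeGroup Set

local notation "𝐱" => FreeGroup.of (0 : Fin 2)
local notation "𝐲" => FreeGroup.of (1 : Fin 2)

def sigma1Aut : MulAut (FreeGroup (Fin 2)) :=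
  MonoidHom.toMulEquiv (FreeGroup.lift ![𝐱 * 𝐲, 𝐲]) (FreeGroup.lift ![𝐱 * 𝐲⁻¹, 𝐲])
    (by ext i; fin_cases i <;> simp) (by ext i; fin_cases i <;> simp)

def sigma2Aut : MulAut (FreeGroup (Fin 2)) :=
  MonoidHom.toMulEquiv (FreeGroup.lift ![𝐱, 𝐲 * 𝐱⁻¹]) (FreeGroup.lift ![𝐱, 𝐲 * 𝐱])
    (by ext i; fin_cases i <;> simp) (by ext i; fin_cases i <;> simp)

@[simp] theorem sigma1Aut_x : sigma1Aut 𝐱 = 𝐱 * 𝐲 := by simp [sigma1Aut]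
@[simp] theorem sigma1Aut_y : sigma1Aut 𝐲 = 𝐲 := by simp [sigma1Aut]
@[simp] theorem sigma1Aut_symm_x : sigma1Aut.symm 𝐱 = 𝐱 * 𝐲⁻¹ := by simp [sigma1Aut]
@[simp] theorem sigma1Aut_symm_y : sigma1Aut.symm 𝐲 = 𝐲 := by simp [sigma1Aut]
@[simp] theorem sigma2Aut_x : sigma2Aut 𝐱 = 𝐱 := by simp [sigma2Aut]
@[simp] theorem sigma2Aut_y : sigma2Aut 𝐲 = 𝐲 * 𝐱⁻¹ := by simp [sigma2Aut]
@[simp] theorem sigma2Aut_symm_x : sigma2Aut.symm 𝐱 = 𝐱 := by simp [sigma2Aut]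
@[simp] theorem sigma2Aut_symm_y : sigma2Aut.symm 𝐲 = 𝐲 * 𝐱 := by simp [sigma2Aut]

theorem sigma1Aut_braid :
    sigma1Aut * sigma2Aut * sigma1Aut = sigma2Aut * sigma1Aut * sigma2Aut := by
  refine MulEquiv.toMonoidHom_injective (FreeGroup.ext_hom _ _ fun i => ?_)
  fin_cases i <;> simp [MulAut.mul_apply, mul_assoc]

def artinRep : BraidGroup 3 →* MulAut (FreeGroup (Fin 2)) :=
  PresentedGroup.toGroup (f := ![sigma1Aut, sigma2Aut]) <| by
    rintro r (⟨i, j, hij, rfl⟩ | ⟨i, j, hij, rfl⟩)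
    · obtain ⟨rfl, rfl⟩ : i = 0 ∧ j = 1 := by constructor <;> ext <;> simp <;> omega
      simp [sigma1Aut_braid]
    · have := j.isLt
      omega

theorem artinRep_braidGen_zero : artinRep (braidGen 3 0) = sigma1Aut := by
  rw [braidGen, dif_pos (by norm_num)]
  exact PresentedGroup.toGroup.of _

theorem artinRep_braidGen_one : artinRep (braidGen 3 1) = sigma2Aut := by
  rw [braidGen, dif_pos (by norm_num)]
  exact PresentedGroup.toGroup.of _

def letterAut (p : ℕ × Bool) : MulAut (FreeGroup (Fin 2)) :=
  artinRep (if p.2 then braidGen 3 p.1 else (braidGen 3 p.1)⁻¹)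

theorem artinRep_evalWord (w : List (ℕ × Bool)) :
    artinRep (evalWord 3 w) = (w.map letterAut).prod := by
  rw [evalWord, map_list_prod, List.map_map]
  rfl

theorem letterCount_sigma1Aut (g : FreeGroup (Fin 2)) :
    letterCount 0 (sigma1Aut g) = letterCount 0 g :=
  letterCount_map_eq _ (by simp [Fin.forall_fin_two, letterCount, toWord_mul, toWord_of])
    (by simp [Fin.forall_fin_two, letterCount, toWord_mul, toWord_of, toWord_inv, invRev]) g

theorem letterCount_sigma2Aut (g : FreeGroup (Fin 2)) :
    letterCount 1 (sigma2Aut g) = letterCount 1 g :=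
  letterCount_map_eq _
    (by simp [Fin.forall_fin_two, letterCount, toWord_mul, toWord_of, toWord_inv, invRev])
    (by simp [Fin.forall_fin_two, letterCount, toWord_mul, toWord_of]) g

theorem letterCount_sigma2Aut_symm (g : FreeGroup (Fin 2)) :
    letterCount 1 (sigma2Aut.symm g) = letterCount 1 g := by
  simpa using (letterCount_sigma2Aut (sigma2Aut.symm g)).symm

def startsXY : Set (FreeGroup (Fin 2)) := {g | ∃ t, g.toWord = (0, true) :: (1, true) :: t}

theorem of_zero_notMem_startsXY : 𝐱 ∉ startsXY := by simp [startsXY, toWord_of]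

theorem mapsTo_startsXY_of_fix_x {φ : MulAut (FreeGroup (Fin 2))} {d : FreeGroup (Fin 2)}
    (hx : φ 𝐱 = 𝐱) (hy : φ 𝐲 = 𝐲 * d) (hd : letterCount 1 d = 0)
    (hφ : ∀ g, letterCount 1 (φ g) = letterCount 1 g) : MapsTo φ startsXY startsXY := by
  rintro g ⟨t, hg⟩
  obtain ⟨rfl, hk⟩ := eq_mk_singleton_mul_of_toWord_eq_cons hg
  have hφk := toWord_map_of_toWord_eq_cons hφ (c := 1) (by simp [letterCount]) hd
    (by simpa [mk_singleton] using hy) hk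
  rw [inv_one, one_mul] at hφk
  refine ⟨(d * φ (mk t)).toWord, ?_⟩
  rw [_root_.map_mul, show φ (mk [(0, true)]) = mk [(0, true)] from hx,
    toWord_mk_singleton_mul_of_head?_ne (by simp [hφk]), hφk]

theorem head?_toWord_y_mul_sigma1Aut_ne {k : FreeGroup (Fin 2)}
    (hk : k.toWord.head? ≠ some (1, false)) :
    (𝐲 * sigma1Aut k).toWord.head? ≠ some (1, false) := by
  obtain ⟨t, ht⟩ : ∃ t, k.toWord = t := ⟨_, rfl⟩
  induction t generalizing k with
  | nil =>
    rw [toWord_eq_nil_iff] at ht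
    simp [ht, toWord_of]
  | cons l t ih =>
    rcases l with ⟨i, s⟩
    fin_cases i <;> cases s <;> dsimp only [Fin.zero_eta, Fin.mk_one, Fin.isValue] at ht ⊢
    · -- `σ₁ x⁻¹ = y⁻¹ x⁻¹`, so `𝐲 * sigma1Aut k` begins with `x⁻¹`
      have h := toWord_map_of_toWord_eq_cons letterCount_sigma1Aut (c := 𝐲⁻¹) (d := 1)
        (by simp [letterCount, toWord_of, invRev]) (by simp [letterCount])
        (by simp [mk_singleton]) ht
      rw [inv_inv] at h
      simp [h]
    · have h := toWord_map_of_toWord_eq_cons letterCount_sigma1Aut (c := 1) (d := 𝐲)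
        (by simp [letterCount]) (by simp [letterCount, toWord_of]) (by simp [mk_singleton]) ht
      rw [inv_one, one_mul] at h
      rw [show 𝐲 = mk [(1, true)] from rfl, toWord_mk_singleton_mul_of_head?_ne (by simp [h])]
      simp
    · simp [ht] at hk
    · obtain ⟨rfl, htk⟩ := eq_mk_singleton_mul_of_toWord_eq_cons ht
      have ih' := ih (k := mk t) (by rw [htk]; exact head?_ne_of_toWord_eq_cons ht) htk
      rw [_root_.map_mul, show mk [((1 : Fin 2), true)] = 𝐲 from rfl, sigma1Aut_y,
        show 𝐲 = mk [(1, true)] from rfl, toWord_mk_singleton_mul_of_head?_ne ih']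
      simp

theorem mapsTo_sigma1Aut : MapsTo sigma1Aut (insert 𝐱 startsXY) startsXY := by
  rintro g (rfl | ⟨t, hg⟩)
  · exact ⟨[], by simp [toWord_mul, toWord_of]⟩
  obtain ⟨rfl, hk⟩ := eq_mk_singleton_mul_of_toWord_eq_cons hg
  obtain ⟨hk', ht⟩ := eq_mk_singleton_mul_of_toWord_eq_cons hk
  have h := head?_toWord_y_mul_sigma1Aut_ne (k := mk t)
    (by rw [ht]; exact head?_ne_of_toWord_eq_cons hk)
  refine ⟨(𝐲 * sigma1Aut (mk t)).toWord, ?_⟩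
  have hy : (𝐲 * (𝐲 * sigma1Aut (mk t))).toWord = (1, true) :: (𝐲 * sigma1Aut (mk t)).toWord :=
    toWord_mk_singleton_mul_of_head?_ne h
  have hx : (𝐱 * (𝐲 * (𝐲 * sigma1Aut (mk t)))).toWord =
      (0, true) :: (𝐲 * (𝐲 * sigma1Aut (mk t))).toWord :=
    toWord_mk_singleton_mul_of_head?_ne (by simp [hy])
  have himage : sigma1Aut (mk [(0, true)] * mk ((1, true) :: t)) =
      𝐱 * (𝐲 * (𝐲 * sigma1Aut (mk t))) := by
    simp [hk', mk_singleton, mul_assoc]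
  rw [himage, hx, hy]

theorem mapsTo_sigma2Aut : MapsTo sigma2Aut startsXY startsXY :=
  mapsTo_startsXY_of_fix_x sigma2Aut_x sigma2Aut_y (by simp [letterCount, toWord_of, invRev])
    letterCount_sigma2Aut

theorem mapsTo_sigma2Aut_symm : MapsTo sigma2Aut.symm startsXY startsXY :=
  mapsTo_startsXY_of_fix_x sigma2Aut_symm_x sigma2Aut_symm_y (by simp [letterCount, toWord_of])
    letterCount_sigma2Aut_symm

def PreservesXY (φ : MulAut (FreeGroup (Fin 2))) : Prop :=
  MapsTo φ startsXY startsXY ∧ MapsTo φ (insert 𝐱 startsXY) (insert 𝐱 startsXY)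

theorem preservesXY_sigma1Aut : PreservesXY sigma1Aut :=
  ⟨mapsTo_sigma1Aut.mono_left (subset_insert _ _), mapsTo_sigma1Aut.mono_right (subset_insert _ _)⟩

theorem preservesXY_of_fix_x {φ : MulAut (FreeGroup (Fin 2))} (hx : φ 𝐱 = 𝐱)
    (h : MapsTo φ startsXY startsXY) : PreservesXY φ :=
  ⟨h, by simpa [hx] using h.insert 𝐱⟩

theorem preservesXY_sigma2Aut : PreservesXY sigma2Aut :=
  preservesXY_of_fix_x sigma2Aut_x mapsTo_sigma2Aut

theorem preservesXY_sigma2Aut_inv : PreservesXY sigma2Aut⁻¹ :=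
  preservesXY_of_fix_x sigma2Aut_symm_x mapsTo_sigma2Aut_symm

theorem preservesXY_letterAut {p : ℕ × Bool} (hp : p.1 < 2) (hA' : p ≠ A') :
    PreservesXY (letterAut p) := by
  rcases p with ⟨i, _ | _⟩ <;> interval_cases i <;>
    simp [letterAut, artinRep_braidGen_zero, artinRep_braidGen_one, A'] at hA' ⊢
  · exact preservesXY_sigma2Aut_inv
  · exact preservesXY_sigma1Aut
  · exact preservesXY_sigma2Aut

theorem preservesXY_letterAut_inv {p : ℕ × Bool} (hp : p.1 < 2) (hA : p ≠ A) :
    PreservesXY (letterAut p)⁻¹ := by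
  rcases p with ⟨i, _ | _⟩ <;> interval_cases i <;>
    simp [letterAut, artinRep_braidGen_zero, artinRep_braidGen_one, A] at hA ⊢
  · exact preservesXY_sigma1Aut
  · exact preservesXY_sigma2Aut
  · exact preservesXY_sigma2Aut_inv

theorem artinRep_evalWord_mul_inv_mem_startsXY {w w' : List (ℕ × Bool)} (h : SigmaOnePos w)
    (h' : SigmaOneNeg w') : artinRep (evalWord 3 w * (evalWord 3 w')⁻¹) 𝐱 ∈ startsXY := by
  obtain ⟨hw, hA, hA'⟩ := h
  obtain ⟨hw', -, hA''⟩ := h'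
  have hpres : ∀ φ ∈ w.map letterAut ++ ((w'.map letterAut).map (·⁻¹)).reverse, PreservesXY φ := by
    simp only [List.mem_append, List.mem_map, List.mem_reverse]
    rintro φ (⟨p, hp, rfl⟩ | ⟨_, ⟨p, hp, rfl⟩, rfl⟩)
    · exact preservesXY_letterAut (hw p hp) (by rintro rfl; exact hA' hp)
    · exact preservesXY_letterAut_inv (hw' p hp) (by rintro rfl; exact hA'' hp)
  rw [_root_.map_mul, _root_.map_inv, artinRep_evalWord, artinRep_evalWord, List.prod_inv_reverse,
    ← List.prod_append]
  refine Set.MapsTo.list_prod_smul_of_mem (fun φ hφ => (hpres φ hφ).1) (fun φ hφ => (hpres φ hφ).2)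
    (List.mem_append_left _ (List.mem_map_of_mem hA)) ?_ (mem_insert 𝐱 startsXY)
  simpa [letterAut, A, artinRep_braidGen_zero] using mapsTo_sigma1Aut

end Braid3

/-- in `B_3`, a `σ_1`-positive word and a `σ_1`-negative word never represent
the same element. -/
theorem stmt9 (w w' : List (ℕ × Bool)) (h : SigmaOnePos w) (h' : SigmaOneNeg w') :
    evalWord 3 w ≠ evalWord 3 w' := by
  intro heq
  have hmem := Braid3.artinRep_evalWord_mul_inv_mem_startsXY h h'
  rw [heq, mul_inv_cancel, map_one] at hmem
  exact Braid3.of_zero_notMem_startsXY hmem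
end

section
/- In the braid group B_3, no σ_1-positive word (a word in σ_1, σ_2^{±1} containing at least one σ_1 and no σ_1^{-1}) represents the identity element. -/
/-!
`B_3` acts on the universal cover of `ℝP¹` by order automorphisms: `σ₁` acts by the lift of
`x ↦ x + 1`, the half twist `Δ = σ₁σ₂σ₁` by the lift of the quarter turn `x ↦ -1/x`, and
`σ₂ = Δσ₁Δ⁻¹`. The cover is modelled as `ℤ ×ₗ WithBot ℝ`, a point `(k, x)` being the lift of
`x ∈ ℝ ∪ {∞}` to the `k`-th sheet, with `∞ = ⊥` at the bottom of each sheet. The lift of `0` on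
sheet `0` is fixed by `σ₂` (as `σ₁` fixes `Δ⁻¹` of it, the lift of `∞`) and pushed up by `σ₁`.
All three letters `σ₁, σ₂, σ₂⁻¹` are monotone and do not lower this point, so a `σ₁`-positive
word raises it strictly and cannot be trivial.
-/

abbrev LiftedLine := ℤ ×ₗ WithBot ℝ

namespace LiftedLine

def origin : LiftedLine := toLex (0, 0)

noncomputable def liftAddOne : LiftedLine ≃o LiftedLine :=
  Prod.Lex.prodLexCongr (OrderIso.refl ℤ) (OrderIso.withBotCongr (OrderIso.addRight 1))

@[simp] lemma liftAddOne_bot (k : ℤ) : liftAddOne (toLex (k, ⊥)) = toLex (k, ⊥) := rfl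

@[simp] lemma liftAddOne_coe (k : ℤ) (x : ℝ) :
    liftAddOne (toLex (k, x)) = toLex (k, ↑(x + 1)) := rfl

@[simp] lemma liftAddOne_symm_bot (k : ℤ) :
    liftAddOne.symm (toLex (k, ⊥)) = toLex (k, ⊥) := rfl

@[simp] lemma liftAddOne_symm_coe (k : ℤ) (x : ℝ) :
    liftAddOne.symm (toLex (k, x)) = toLex (k, ↑(x - 1)) := rfl

noncomputable def nextSheet : LiftedLine ≃o LiftedLine :=
  Prod.Lex.prodLexCongr (OrderIso.addRight 1) (OrderIso.refl _)

@[simp] lemma nextSheet_apply (k : ℤ) (a : WithBot ℝ) :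
    nextSheet (toLex (k, a)) = toLex (k + 1, a) := rfl

noncomputable def turnOnSheet (k : ℤ) : WithBot ℝ → LiftedLine
  | ⊥ => toLex (k, 0)
  | (x : ℝ) =>
    if x < 0 then toLex (k, ↑(-x⁻¹))
    else if x = 0 then toLex (k + 1, ⊥)
    else toLex (k + 1, ↑(-x⁻¹))

@[simp] lemma turnOnSheet_bot (k : ℤ) : turnOnSheet k ⊥ = toLex (k, 0) := rfl

lemma turnOnSheet_of_neg (k : ℤ) {x : ℝ} (hx : x < 0) :
    turnOnSheet k x = toLex (k, ↑(-x⁻¹)) := by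
  simp [turnOnSheet, hx]

@[simp] lemma turnOnSheet_zero (k : ℤ) : turnOnSheet k 0 = toLex (k + 1, ⊥) := by
  simp [turnOnSheet]

lemma turnOnSheet_of_pos (k : ℤ) {x : ℝ} (hx : 0 < x) :
    turnOnSheet k x = toLex (k + 1, ↑(-x⁻¹)) := by
  simp [turnOnSheet, hx.not_gt, hx.ne']

lemma turnOnSheet_mem_Ico (k : ℤ) (a : WithBot ℝ) :
    turnOnSheet k a ∈ Set.Ico (toLex (k, 0)) (toLex (k + 1, 0)) := by
  cases a with
  | bot => simp [Prod.Lex.toLex_lt_toLex]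
  | coe x =>
    rcases lt_trichotomy x 0 with hx | rfl | hx
    · simp [turnOnSheet_of_neg k hx, Prod.Lex.toLex_le_toLex, Prod.Lex.toLex_lt_toLex, hx.le]
    · simp [Prod.Lex.toLex_le_toLex, Prod.Lex.toLex_lt_toLex]
    · simp [turnOnSheet_of_pos k hx, Prod.Lex.toLex_le_toLex, Prod.Lex.toLex_lt_toLex, hx]

lemma turnOnSheet_strictMono (k : ℤ) : StrictMono (turnOnSheet k) := by
  intro a b hab
  cases a with
  | bot =>
    cases b with
    | bot => exact absurd hab (lt_irrefl _)
    | coe y =>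
      rcases lt_trichotomy y 0 with hy | rfl | hy
      · simp [turnOnSheet_of_neg k hy, Prod.Lex.toLex_lt_toLex, hy]
      · simp [Prod.Lex.toLex_lt_toLex]
      · simp [turnOnSheet_of_pos k hy, Prod.Lex.toLex_lt_toLex]
  | coe x =>
    cases b with
    | bot => exact absurd hab not_lt_bot
    | coe y =>
      have hxy : x < y := WithBot.coe_lt_coe.1 hab
      rcases lt_trichotomy x 0 with hx | rfl | hx <;>
        rcases lt_trichotomy y 0 with hy | rfl | hy
      all_goals first | linarith | skip
      · simp [turnOnSheet_of_neg k hx, turnOnSheet_of_neg k hy, Prod.Lex.toLex_lt_toLex,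
          inv_lt_inv_of_neg hy hx, hxy]
      · simp [turnOnSheet_of_neg k hx, Prod.Lex.toLex_lt_toLex]
      · simp [turnOnSheet_of_neg k hx, turnOnSheet_of_pos k hy, Prod.Lex.toLex_lt_toLex]
      · simp [turnOnSheet_of_pos k hy, Prod.Lex.toLex_lt_toLex]
      · simp [turnOnSheet_of_pos k hx, turnOnSheet_of_pos k hy, Prod.Lex.toLex_lt_toLex,
          inv_lt_inv₀ hy hx, hxy]

noncomputable def quarterTurn (p : LiftedLine) : LiftedLine :=
  turnOnSheet (ofLex p).1 (ofLex p).2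

@[simp] lemma quarterTurn_toLex (k : ℤ) (a : WithBot ℝ) :
    quarterTurn (toLex (k, a)) = turnOnSheet k a := rfl

lemma quarterTurn_quarterTurn (p : LiftedLine) : quarterTurn (quarterTurn p) = nextSheet p := by
  induction p using Lex.rec with | h p
  obtain ⟨k, a⟩ := p
  cases a with
  | bot => simp
  | coe x =>
    rcases lt_trichotomy x 0 with hx | rfl | hx
    · simp [turnOnSheet_of_neg k hx, turnOnSheet_of_pos k (neg_pos.2 (inv_lt_zero.2 hx))]
    · simp
    · simp [turnOnSheet_of_pos k hx, turnOnSheet_of_neg (k + 1) (neg_neg_of_pos (inv_pos.2 hx))]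

lemma quarterTurn_strictMono : StrictMono quarterTurn := by
  intro p q hpq
  induction p using Lex.rec with | h p
  induction q using Lex.rec with | h q
  rcases Prod.Lex.toLex_lt_toLex.1 hpq with hk | ⟨hk, ha⟩
  · calc quarterTurn (toLex p) < toLex (p.1 + 1, 0) := (turnOnSheet_mem_Ico _ _).2
      _ ≤ toLex (q.1, 0) := Prod.Lex.toLex_le_toLex'.2 ⟨hk, fun _ => le_rfl⟩
      _ ≤ quarterTurn (toLex q) := (turnOnSheet_mem_Ico _ _).1
  · change turnOnSheet p.1 p.2 < turnOnSheet q.1 q.2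
    rw [hk]
    exact turnOnSheet_strictMono _ ha

lemma quarterTurn_surjective : Function.Surjective quarterTurn := fun p =>
  ⟨quarterTurn (nextSheet.symm p), by rw [quarterTurn_quarterTurn, OrderIso.apply_symm_apply]⟩

noncomputable def quarterTurnIso : LiftedLine ≃o LiftedLine :=
  quarterTurn_strictMono.orderIsoOfSurjective _ quarterTurn_surjective

lemma quarterTurn_liftAddOne_symm_quarterTurn (p : LiftedLine) :
    quarterTurn (liftAddOne.symm (quarterTurn p)) = liftAddOne (quarterTurn (liftAddOne p)) := by
  induction p using Lex.rec with | h p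
  obtain ⟨k, a⟩ := p
  cases a with
  | bot =>
    rw [liftAddOne_bot, quarterTurn_toLex, turnOnSheet_bot, ← WithBot.coe_zero,
      liftAddOne_symm_coe, liftAddOne_coe, quarterTurn_toLex, turnOnSheet_of_neg k (by norm_num)]
    norm_num
  | coe x =>
    have hform (hx : x ≠ 0) : -x⁻¹ - 1 = -((x + 1) / x) := by field_simp; ring
    have key (hx : x ≠ 0) (hx1 : x + 1 ≠ 0) : -(-((x + 1) / x))⁻¹ = -(x + 1)⁻¹ + 1 := by
      field_simp; ring
    rw [liftAddOne_coe, quarterTurn_toLex, quarterTurn_toLex]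
    rcases lt_trichotomy x 0 with hx | rfl | hx
    · rw [turnOnSheet_of_neg k hx, liftAddOne_symm_coe, hform hx.ne, quarterTurn_toLex]
      rcases lt_trichotomy x (-1) with hx1 | rfl | hx1
      · have h : 0 < (x + 1) / x := div_pos_of_neg_of_neg (by linarith) hx
        simp only [turnOnSheet_of_neg k (neg_neg_of_pos h),
          turnOnSheet_of_neg k (by linarith : x + 1 < 0), liftAddOne_coe, toLex_inj,
          Prod.mk.injEq, WithBot.coe_inj, true_and]
        exact key hx.ne (by linarith : x + 1 < 0).ne
      · norm_num
      · have h : (x + 1) / x < 0 := div_neg_of_pos_of_neg (by linarith) hx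
        simp only [turnOnSheet_of_pos k (neg_pos_of_neg h),
          turnOnSheet_of_pos k (by linarith : 0 < x + 1), liftAddOne_coe, toLex_inj,
          Prod.mk.injEq, WithBot.coe_inj, true_and]
        exact key hx.ne (by linarith : 0 < x + 1).ne'
    · rw [zero_add, turnOnSheet_of_pos k one_pos, liftAddOne_coe]
      norm_num
    · have h : 0 < (x + 1) / x := div_pos (by linarith) hx
      rw [turnOnSheet_of_pos k hx, liftAddOne_symm_coe, hform hx.ne', quarterTurn_toLex]
      simp only [turnOnSheet_of_neg _ (neg_neg_of_pos h),
        turnOnSheet_of_pos k (by linarith : 0 < x + 1), liftAddOne_coe, toLex_inj,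
        Prod.mk.injEq, WithBot.coe_inj, true_and]
      exact key hx.ne' (by linarith : 0 < x + 1).ne'

lemma quarterTurnIso_mul_liftAddOne_inv_mul_quarterTurnIso :
    quarterTurnIso * liftAddOne⁻¹ * quarterTurnIso = liftAddOne * quarterTurnIso * liftAddOne :=
  RelIso.ext quarterTurn_liftAddOne_symm_quarterTurn

lemma origin_lt_liftAddOne_origin : origin < liftAddOne origin := by
  rw [origin, ← WithBot.coe_zero, liftAddOne_coe]
  simp [Prod.Lex.toLex_lt_toLex]

lemma conj_liftAddOne_origin :
    (quarterTurnIso * liftAddOne * quarterTurnIso⁻¹) origin = origin := by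
  have h : quarterTurnIso⁻¹ origin = toLex (0, ⊥) := quarterTurnIso.symm_apply_eq.2 rfl
  change quarterTurnIso (liftAddOne (quarterTurnIso⁻¹ origin)) = origin
  rw [h]
  rfl

end LiftedLine

open LiftedLine

lemma braid_relation_of_conj {G : Type*} [Group G] {a d : G} (h : d * a⁻¹ * d = a * d * a) :
    a * (d * a * d⁻¹) * a = d * a * d⁻¹ * a * (d * a * d⁻¹) := by
  have h₁ : a * (d * a * d⁻¹) * a = d :=
    calc a * (d * a * d⁻¹) * a = a * d * a * d⁻¹ * a := by group
      _ = d := by rw [← h]; group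
  have h₂ : d * a * d⁻¹ * a * (d * a * d⁻¹) = d :=
    calc d * a * d⁻¹ * a * (d * a * d⁻¹) = d * a * d⁻¹ * (a * d * a) * d⁻¹ := by group
      _ = d := by rw [← h]; group
  rw [h₁, h₂]

lemma le_list_prod_apply {α : Type*} [Preorder α] {c : α} {l : List (α ≃o α)}
    (h : ∀ g ∈ l, c ≤ g c) : c ≤ l.prod c := by
  induction l with
  | nil => exact le_rfl
  | cons g l ih =>
    rw [List.prod_cons, RelIso.mul_apply]
    exact (h g List.mem_cons_self).trans
      (g.monotone (ih fun g' hg' => h g' (List.mem_cons_of_mem _ hg')))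

lemma lt_list_prod_apply {α : Type*} [Preorder α] {c : α} {l : List (α ≃o α)}
    (h : ∀ g ∈ l, c ≤ g c) (hlt : ∃ g ∈ l, c < g c) : c < l.prod c := by
  induction l with
  | nil => simp at hlt
  | cons g l ih =>
    rw [List.prod_cons, RelIso.mul_apply]
    have htail : ∀ g' ∈ l, c ≤ g' c := fun g' hg' => h g' (List.mem_cons_of_mem _ hg')
    obtain ⟨g', hg', hcg'⟩ := hlt
    rcases List.mem_cons.1 hg' with rfl | hg'
    · exact hcg'.trans_le (g'.monotone (le_list_prod_apply htail))
    · exact (h g List.mem_cons_self).trans_lt (g.strictMono (ih htail ⟨g', hg', hcg'⟩))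

noncomputable def generatorAct : Fin 2 → (LiftedLine ≃o LiftedLine) :=
  ![liftAddOne, quarterTurnIso * liftAddOne * quarterTurnIso⁻¹]

lemma lift_generatorAct_braidRels : ∀ r ∈ braidRels 2, FreeGroup.lift generatorAct r = 1 := by
  rintro r (⟨i, j, hij, rfl⟩ | ⟨i, j, hij, -⟩)
  · obtain ⟨rfl, rfl⟩ : i = 0 ∧ j = 1 := by omega
    simp only [map_mul, map_inv, FreeGroup.lift_apply_of, generatorAct, Matrix.cons_val_zero,
      Matrix.cons_val_one, mul_inv_eq_one]
    exact braid_relation_of_conj quarterTurnIso_mul_liftAddOne_inv_mul_quarterTurnIso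
  · omega

noncomputable def braidAct : BraidGroup 3 →* (LiftedLine ≃o LiftedLine) :=
  PresentedGroup.toGroup lift_generatorAct_braidRels

lemma braidAct_braidGen {i : ℕ} (hi : i < 2) :
    braidAct (braidGen 3 i) = generatorAct ⟨i, hi⟩ := by
  rw [braidGen, dif_pos hi]
  exact PresentedGroup.toGroup.of lift_generatorAct_braidRels

def letter (n : ℕ) (p : ℕ × Bool) : BraidGroup n :=
  if p.2 then braidGen n p.1 else (braidGen n p.1)⁻¹

lemma evalWord_eq_prod (n : ℕ) (w : List (ℕ × Bool)) :
    evalWord n w = (w.map (letter n)).prod := rfl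

lemma braidAct_letter_A : braidAct (letter 3 A) = liftAddOne := by
  rw [letter, A, if_pos rfl]
  exact braidAct_braidGen two_pos

lemma braidAct_letter_B :
    braidAct (letter 3 B) = quarterTurnIso * liftAddOne * quarterTurnIso⁻¹ := by
  rw [letter, B, if_pos rfl]
  exact braidAct_braidGen one_lt_two

lemma braidAct_letter_B' :
    braidAct (letter 3 B') = (quarterTurnIso * liftAddOne * quarterTurnIso⁻¹)⁻¹ := by
  rw [← braidAct_letter_B, ← map_inv]
  rfl

lemma origin_le_braidAct_letter {p : ℕ × Bool} (hp : p.1 < 2) (hp' : p ≠ A') :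
    origin ≤ braidAct (letter 3 p) origin := by
  obtain ⟨_ | _ | _, _ | _⟩ := p
  · exact absurd rfl hp'
  · exact braidAct_letter_A ▸ origin_lt_liftAddOne_origin.le
  · rw [show ((1, false) : ℕ × Bool) = B' from rfl, braidAct_letter_B']
    exact ((RelIso.symm_apply_eq _).2 conj_liftAddOne_origin.symm).ge
  · rw [show ((1, true) : ℕ × Bool) = B from rfl, braidAct_letter_B, conj_liftAddOne_origin]
  all_goals omega

/-- in `B_3`, no `σ_1`-positive word (containing `σ_1` at least once and
never `σ_1⁻¹`) represents the identity. -/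
theorem stmt10 (w : List (ℕ × Bool)) (hw : ValidWord3 w) (hA : A ∈ w) (hA' : A' ∉ w) :
    evalWord 3 w ≠ 1 := by
  intro h
  have hmoves : origin < braidAct (evalWord 3 w) origin := by
    rw [evalWord_eq_prod, map_list_prod, List.map_map]
    refine lt_list_prod_apply ?_ ⟨liftAddOne, List.mem_map.2 ⟨A, hA, braidAct_letter_A⟩,
      origin_lt_liftAddOne_origin⟩
    simp only [List.mem_map, Function.comp_apply, forall_exists_index, and_imp]
    rintro _ p hp rfl
    exact origin_le_braidAct_letter (hw p hp) (ne_of_mem_of_not_mem hp hA')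
  rw [h, map_one] at hmoves
  exact lt_irrefl _ hmoves
end

section
/- Every element of the braid group B_3 admits a σ_1-consistent representative word: a word containing σ_1 but not σ_1^{-1}, or containing σ_1^{-1} but not σ_1, or containing neither (in which case the element lies in the subgroup generated by σ_2). -/
/-!
Let `M` be the monoid generated by `σ₁, σ₂, σ₂⁻¹` and `M'` the one generated by
`σ₁⁻¹, σ₂, σ₂⁻¹`. It suffices that `M ∪ M'` is closed under right multiplication by the
generators. Since `σᵢ ↦ σᵢ⁻¹` preserves the braid relation and swaps `M` and `M'`, the only
real case is `x * σ₁` with `x ∈ M'`: writing `x = y σ₁⁻¹ σ₂ⁿ`, the relation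
`σ₁⁻¹ σ₂ⁿ σ₁ = σ₂ σ₁ⁿ σ₂⁻¹` moves `σ₁` into `y`, which has one handle less. This handle reduction
terminates because the number of `σ₁⁻¹` plus the negative parts of the `σ₂`-exponents never
increases, and strictly decreases whenever a positive power of `σ₁` has to be pushed further in.
-/

section

variable {G : Type*} [Group G] {g u v x : G} {c d : ℕ}

def nonnegMonoid (g v : G) : Submonoid G := Submonoid.closure {g, v, v⁻¹}

lemma nonnegMonoid_inv_right (g v : G) : nonnegMonoid g v⁻¹ = nonnegMonoid g v := by
  simp only [nonnegMonoid, inv_inv, Set.pair_comm]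

lemma zpow_mem_nonnegMonoid (g v : G) (n : ℤ) : v ^ n ∈ nonnegMonoid g v := by
  have hv : v ∈ nonnegMonoid g v := Submonoid.subset_closure (by simp)
  have hv' : v⁻¹ ∈ nonnegMonoid g v := Submonoid.subset_closure (by simp)
  cases n with
  | ofNat k => simpa using pow_mem hv k
  | negSucc k => simpa using pow_mem hv' (k + 1)

lemma self_mem_nonnegMonoid (g v : G) : g ∈ nonnegMonoid g v := Submonoid.subset_closure (by simp)

/-- `HasForm g v c x`: `x = v^{n₀} g v^{n₁} ⋯ g v^{n_k}` with `k + ∑ᵢ max (-nᵢ) 0 ≤ c`. -/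
inductive HasForm (g v : G) : ℕ → G → Prop
  | zpow (n : ℤ) {c : ℕ} (h : (-n).toNat ≤ c) : HasForm g v c (v ^ n)
  | snoc {k : ℕ} {y : G} (hy : HasForm g v k y) (n : ℤ) {d : ℕ} (h : k + 1 + (-n).toNat ≤ d) :
      HasForm g v d (y * g * v ^ n)

namespace HasForm

lemma mono (hx : HasForm g v c x) (hcd : c ≤ d) : HasForm g v d x := by
  cases hx with
  | zpow n h => exact zpow n (h.trans hcd)
  | snoc hy n h => exact snoc hy n (h.trans hcd)

lemma mul_zpow (hx : HasForm g v c x) (e : ℤ) : HasForm g v (c + (-e).toNat) (x * v ^ e) := by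
  cases hx with
  | zpow n h => rw [← zpow_add]; exact zpow _ (by omega)
  | snoc hy n h => rw [mul_assoc, ← zpow_add]; exact snoc hy _ (by omega)

lemma mul_pow (hx : HasForm g v c x) (j : ℕ) : HasForm g v (c + j) (x * g ^ j) := by
  induction j with
  | zero => simpa using hx
  | succ j ih => simpa [pow_succ, mul_assoc] using snoc ih 0 (d := c + (j + 1)) (by omega)

lemma mem_nonnegMonoid (hx : HasForm g v c x) : x ∈ nonnegMonoid g v := by
  induction hx with
  | zpow n => exact zpow_mem_nonnegMonoid g v n
  | snoc _ n _ ih =>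
    exact mul_mem (mul_mem ih (self_mem_nonnegMonoid g v)) (zpow_mem_nonnegMonoid g v n)

end HasForm

lemma exists_hasForm_of_mem (hx : x ∈ nonnegMonoid g v) : ∃ c, HasForm g v c x := by
  induction hx using Submonoid.closure_induction_right with
  | one => exact ⟨0, by simpa using HasForm.zpow (g := g) (v := v) 0 le_rfl⟩
  | mul_right x _ y hy ih =>
    obtain ⟨c, hc⟩ := ih
    rcases hy with rfl | rfl | rfl
    · exact ⟨_, by simpa using hc.snoc 0 le_rfl⟩
    · exact ⟨_, by simpa using hc.mul_zpow 1⟩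
    · exact ⟨_, by simpa using hc.mul_zpow (-1)⟩

lemma inv_mul_zpow_mul_of_braid (huv : u * v * u = v * u * v) (n : ℤ) :
    u⁻¹ * v ^ n * u = v * u ^ n * v⁻¹ := by
  have h : u⁻¹ * v * u = v * u * v⁻¹ :=
    calc u⁻¹ * v * u = u⁻¹ * (v * u * v) * v⁻¹ := by group
      _ = v * u * v⁻¹ := by rw [← huv]; group
  have hconj := conj_zpow (a := u⁻¹) (b := v) (i := n)
  rw [inv_inv, h, conj_zpow] at hconj
  exact hconj.symm
  
lemma HasForm.mul_pow_mem_or (huv : u * v * u = v * u * v) (hx : HasForm u⁻¹ v c x) (m : ℕ) :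
    x * u ^ m ∈ nonnegMonoid u v ∨ HasForm u⁻¹ v c (x * u ^ m) := by
  induction c using Nat.strong_induction_on generalizing x m with
  | _ c ihc =>
  induction m generalizing x with
  | zero => simpa using Or.inr hx
  | succ m ihm =>
    cases hx with
    | zpow n _ =>
      exact Or.inl (mul_mem (zpow_mem_nonnegMonoid u v n) (pow_mem (self_mem_nonnegMonoid u v) _))
    | @snoc cy y hy n hc =>
      have key : y * u⁻¹ * v ^ n * u ^ (m + 1) = y * v * u ^ n * v⁻¹ * u ^ m := by
        calc y * u⁻¹ * v ^ n * u ^ (m + 1) = y * (u⁻¹ * v ^ n * u) * u ^ m := by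
              rw [pow_succ']; group
          _ = y * v * u ^ n * v⁻¹ * u ^ m := by rw [inv_mul_zpow_mul_of_braid huv]; group
      rw [key]
      rcases le_or_gt n 0 with hn | hn
      · have hun : u ^ n = u⁻¹ ^ (-n).toNat := by
          rw [inv_pow, ← zpow_natCast, ← zpow_neg, Int.toNat_of_nonneg (by omega), neg_neg]
        rw [hun]
        have h := ((hy.mul_zpow 1).mul_pow (-n).toNat).mul_zpow (-1)
        rw [zpow_one, zpow_neg_one] at h
        exact ihm (h.mono (by omega))
      · have hyv : HasForm u⁻¹ v cy (y * v) := by simpa using hy.mul_zpow 1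
        have hun : u ^ n = u ^ n.toNat := by
          rw [← zpow_natCast, Int.toNat_of_nonneg hn.le]
        rw [hun]
        rcases ihc cy (by omega) hyv n.toNat with hz | hz
        · exact Or.inl (mul_mem (mul_mem hz (by simpa using zpow_mem_nonnegMonoid u v (-1)))
            (pow_mem (self_mem_nonnegMonoid u v) _))
        · have h := hz.mul_zpow (-1)
          rw [zpow_neg_one] at h
          exact ihm (h.mono (by omega))

lemma braid_rel_inv (huv : u * v * u = v * u * v) : u⁻¹ * v⁻¹ * u⁻¹ = v⁻¹ * u⁻¹ * v⁻¹ := by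
  simpa only [mul_inv_rev, mul_assoc] using congrArg (·⁻¹) huv

lemma mul_mem_nonnegMonoid_or (huv : u * v * u = v * u * v)
    (hx : x ∈ nonnegMonoid u v ∨ x ∈ nonnegMonoid u⁻¹ v) :
    x * u ∈ nonnegMonoid u v ∨ x * u ∈ nonnegMonoid u⁻¹ v := by
  rcases hx with hx | hx
  · exact Or.inl (mul_mem hx (self_mem_nonnegMonoid u v))
  · obtain ⟨c, hc⟩ := exists_hasForm_of_mem hx
    simpa using (hc.mul_pow_mem_or huv 1).imp_right HasForm.mem_nonnegMonoid

lemma mul_inv_mem_nonnegMonoid_or (huv : u * v * u = v * u * v)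
    (hx : x ∈ nonnegMonoid u v ∨ x ∈ nonnegMonoid u⁻¹ v) :
    x * u⁻¹ ∈ nonnegMonoid u v ∨ x * u⁻¹ ∈ nonnegMonoid u⁻¹ v := by
  have h := mul_mem_nonnegMonoid_or (braid_rel_inv huv) (x := x)
  simp only [nonnegMonoid_inv_right, inv_inv] at h
  exact (h hx.symm).symm

theorem mem_nonnegMonoid_or_of_mem_closure (huv : u * v * u = v * u * v)
    (hx : x ∈ Subgroup.closure {u, v}) :
    x ∈ nonnegMonoid u v ∨ x ∈ nonnegMonoid u⁻¹ v := by
  induction hx using Subgroup.closure_induction_right with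
  | one => exact Or.inl (one_mem _)
  | mul_right x _ y hy ih =>
    rcases hy with rfl | rfl
    · exact mul_mem_nonnegMonoid_or huv ih
    · simpa using ih.imp (mul_mem · (zpow_mem_nonnegMonoid _ _ 1))
        (mul_mem · (zpow_mem_nonnegMonoid _ _ 1))
  | mul_inv_cancel x _ y hy ih =>
    rcases hy with rfl | rfl
    · exact mul_inv_mem_nonnegMonoid_or huv ih
    · simpa using ih.imp (mul_mem · (zpow_mem_nonnegMonoid _ _ (-1)))
        (mul_mem · (zpow_mem_nonnegMonoid _ _ (-1)))

end

lemma evalWord_append (n : ℕ) (w₁ w₂ : List (ℕ × Bool)) :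
    evalWord n (w₁ ++ w₂) = evalWord n w₁ * evalWord n w₂ := by
  simp [evalWord]

lemma exists_word_of_mem_closure {n : ℕ} {L : Set (ℕ × Bool)} {x : BraidGroup n}
    (hx : x ∈ Submonoid.closure ((fun l => evalWord n [l]) '' L)) :
    ∃ w, (∀ l ∈ w, l ∈ L) ∧ evalWord n w = x := by
  induction hx using Submonoid.closure_induction with
  | mem x hx =>
    obtain ⟨l, hl, rfl⟩ := hx
    exact ⟨[l], by simpa using hl, rfl⟩
  | one => exact ⟨[], by simp, rfl⟩
  | mul x y _ _ hx hy =>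
    obtain ⟨w₁, hw₁, rfl⟩ := hx
    obtain ⟨w₂, hw₂, rfl⟩ := hy
    exact ⟨w₁ ++ w₂, fun l hl => (List.mem_append.mp hl).elim (hw₁ l) (hw₂ l),
      evalWord_append n w₁ w₂⟩

lemma evalWord_mem_zpowers {n i : ℕ} {w : List (ℕ × Bool)} (hw : ∀ l ∈ w, l.1 = i) :
    evalWord n w ∈ Subgroup.zpowers (braidGen n i) := by
  refine Subgroup.list_prod_mem _ fun _ hx => ?_
  obtain ⟨l, hl, rfl⟩ := List.mem_map.mp hx
  rw [hw l hl]
  split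
  · exact Subgroup.mem_zpowers _
  · exact inv_mem (Subgroup.mem_zpowers _)

lemma braidGen_three_braid_rel :
    braidGen 3 0 * braidGen 3 1 * braidGen 3 0 = braidGen 3 1 * braidGen 3 0 * braidGen 3 1 := by
  have h := PresentedGroup.mk_eq_mk_of_mul_inv_mem (rels := braidRels (3 - 1))
    (Or.inl ⟨0, 1, rfl, rfl⟩)
  simp only [map_mul] at h
  simp only [braidGen]
  exact h

lemma closure_braidGen_three_eq_top :
    Subgroup.closure {braidGen 3 0, braidGen 3 1} = ⊤ := by
  refine (Subgroup.eq_top_iff' _).mpr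
    (PresentedGroup.generated_by _ _ fun j => Subgroup.subset_closure ?_)
  fin_cases j <;> simp [braidGen]

lemma nonnegMonoid_braidGen_three (ε : Bool) :
    nonnegMonoid (evalWord 3 [(0, ε)]) (braidGen 3 1) =
      Submonoid.closure ((fun l => evalWord 3 [l]) '' {(0, ε), B, B'}) := by
  simp [nonnegMonoid, Set.image_insert_eq, evalWord, B, B']

/-- every element of `B_3` admits a `σ_1`-consistent representative word:
one not containing both `σ_1` and `σ_1⁻¹`; if it contains neither, the element lies in the
subgroup generated by `σ_2`. -/
theorem stmt11 (β : BraidGroup 3) :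
    ∃ w : List (ℕ × Bool), ValidWord3 w ∧ evalWord 3 w = β ∧
      (A ∉ w ∨ A' ∉ w) ∧
      (A ∉ w ∧ A' ∉ w → β ∈ Subgroup.zpowers (braidGen 3 1)) := by
  obtain ⟨ε, hβ⟩ : ∃ ε : Bool, β ∈ nonnegMonoid (evalWord 3 [(0, ε)]) (braidGen 3 1) := by
    have hβ := closure_braidGen_three_eq_top ▸ Subgroup.mem_top β
    rcases mem_nonnegMonoid_or_of_mem_closure braidGen_three_braid_rel hβ with h | h
    exacts [⟨true, by simpa [evalWord] using h⟩, ⟨false, by simpa [evalWord] using h⟩]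
  rw [nonnegMonoid_braidGen_three] at hβ
  obtain ⟨w, hw, rfl⟩ := exists_word_of_mem_closure hβ
  refine ⟨w, fun l hl => ?_, rfl, ?_, fun hA => evalWord_mem_zpowers fun l hl => ?_⟩
  · rcases hw l hl with rfl | rfl | rfl <;> simp [B, B']
  · cases ε
    · exact Or.inl fun h => by simpa [A, B, B'] using hw A h
    · exact Or.inr fun h => by simpa [A', B, B'] using hw A' h
  · rcases hw l hl with rfl | rfl | rfl
    · cases ε
      exacts [absurd hl hA.2, absurd hl hA.1]
    all_goals rfl
end

section
/- In the braid group B_3, the word σ_2^{-1} σ_1 σ_2 σ_2^k (for any k ≥ 0) is geodesic: no word of length less than k + 3 in σ_1^{±1}, σ_2^{±1} represents the element σ_2^{-1} σ_1 σ_2^{k+1}. -/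
open Matrix

namespace BraidGroup

lemma evalWord_cons (n : ℕ) (l : ℕ × Bool) (w : List (ℕ × Bool)) :
    evalWord n (l :: w) =
      (if l.2 then braidGen n l.1 else (braidGen n l.1)⁻¹) * evalWord n w := by
  simp [evalWord]

def exponentSum (n : ℕ) : BraidGroup n →* Multiplicative ℤ :=
  PresentedGroup.toGroup (f := fun _ => Multiplicative.ofAdd 1) <| by
    rintro r (⟨i, j, -, rfl⟩ | ⟨i, j, -, rfl⟩) <;> simp

lemma exponentSum_braidGen {n i : ℕ} (hi : i < n - 1) :
    exponentSum n (braidGen n i) = Multiplicative.ofAdd 1 := by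
  simp [braidGen, hi, exponentSum]

lemma exponentSum_evalWord {n : ℕ} (w : List (ℕ × Bool)) (hw : ∀ l ∈ w, l.1 < n - 1) :
    (Multiplicative.toAdd (exponentSum n (evalWord n w)) + 2 * w.countP (fun l => !l.2) : ℤ) =
      w.length := by
  induction w with
  | nil => simp [evalWord]
  | cons l w ih =>
    obtain ⟨hl, hw⟩ := List.forall_mem_cons.mp hw
    have := ih hw
    rcases l with ⟨i, _ | _⟩ <;> simp [evalWord_cons, exponentSum_braidGen hl] <;> linarith

lemma forall_mem_snd_of_length_lt {n : ℕ} (w : List (ℕ × Bool)) (hw : ∀ l ∈ w, l.1 < n - 1)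
    (hlen : (w.length : ℤ) < Multiplicative.toAdd (exponentSum n (evalWord n w)) + 2) :
    ∀ l ∈ w, l.2 = true := by
  have hcount : w.countP (fun l => !l.2) = 0 := by
    have := exponentSum_evalWord w hw
    omega
  simpa using List.countP_eq_zero.mp hcount

def burauX : Matrix (Fin 2) (Fin 2) ℤ := !![3, 1; 0, 1]

def burauY : Matrix (Fin 2) (Fin 2) ℤ := !![1, 0; -3, 3]

lemma det_burauX : burauX.det = 3 := by simp [burauX, det_fin_two_of]

lemma det_burauY : burauY.det = 3 := by simp [burauY, det_fin_two_of]

lemma burauX_mul_burauY_mul_burauX :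
    burauX * burauY * burauX = burauY * burauX * burauY := by
  simp [burauX, burauY]

noncomputable def burauGen : Fin 2 → GL (Fin 2) ℚ :=
  ![GeneralLinearGroup.mkOfDetNeZero ((Int.castRingHom ℚ).mapMatrix burauX)
      (by rw [← RingHom.map_det, det_burauX]; norm_num),
    GeneralLinearGroup.mkOfDetNeZero ((Int.castRingHom ℚ).mapMatrix burauY)
      (by rw [← RingHom.map_det, det_burauY]; norm_num)]

noncomputable def burau : BraidGroup 3 →* GL (Fin 2) ℚ :=
  PresentedGroup.toGroup (f := burauGen) <| by
    rintro r (⟨i, j, hij, rfl⟩ | ⟨i, j, hij, rfl⟩) <;> fin_cases i <;> fin_cases j <;>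
      norm_num at hij
    simp only [map_mul, map_inv, FreeGroup.lift_apply_of, mul_inv_eq_one]
    ext1
    have := congrArg (Int.castRingHom ℚ).mapMatrix burauX_mul_burauY_mul_burauX
    simp only [map_mul] at this
    simpa [burauGen] using this

lemma burau_braidGen_zero : (burau (braidGen 3 0) : Matrix (Fin 2) (Fin 2) ℚ) =
    (Int.castRingHom ℚ).mapMatrix burauX := by
  simp [burau, braidGen, burauGen]

lemma burau_braidGen_one : (burau (braidGen 3 1) : Matrix (Fin 2) (Fin 2) ℚ) =
    (Int.castRingHom ℚ).mapMatrix burauY := by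
  simp [burau, braidGen, burauGen]

def upperTriangularModThree : Subsemiring (Matrix (Fin 2) (Fin 2) ℤ) :=
  (blockTriangularSubsemiring (R := ZMod 3) (id : Fin 2 → Fin 2)).comap
    (Int.castRingHom (ZMod 3)).mapMatrix

lemma mem_upperTriangularModThree {P : Matrix (Fin 2) (Fin 2) ℤ} :
    P ∈ upperTriangularModThree ↔ (P 1 0 : ZMod 3) = 0 := by
  simp [upperTriangularModThree, BlockTriangular, Fin.forall_fin_two]

lemma burau_evalWord_mem_of_forall_pos {w : List (ℕ × Bool)}
    (hw : ∀ l ∈ w, l.1 < 2 ∧ l.2 = true) :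
    (burau (evalWord 3 w) : Matrix (Fin 2) (Fin 2) ℚ) ∈
      upperTriangularModThree.map (Int.castRingHom ℚ).mapMatrix := by
  induction w with
  | nil => simp [evalWord]
  | cons l w ih =>
    obtain ⟨⟨hl, hpos⟩, hw⟩ := List.forall_mem_cons.mp hw
    rw [evalWord_cons, hpos, if_pos rfl, map_mul, Units.val_mul]
    refine Subsemiring.mul_mem _ ?_ (ih hw)
    interval_cases l.1
    · exact ⟨burauX, by simp [mem_upperTriangularModThree, burauX], burau_braidGen_zero.symm⟩
    · exact ⟨burauY, by simp [mem_upperTriangularModThree, burauY]; decide,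
        burau_braidGen_one.symm⟩

lemma burauX_mul_burauY : burauX * burauY = burauY * !![0, 3; -1, 4] := by
  simp [burauX, burauY]

lemma burau_conj_mul_pow (k : ℕ) :
    (burau ((braidGen 3 1)⁻¹ * braidGen 3 0 * braidGen 3 1 ^ (k + 1)) :
      Matrix (Fin 2) (Fin 2) ℚ) =
      (Int.castRingHom ℚ).mapMatrix (!![0, 3; -1, 4] * burauY ^ k) := by
  rw [mul_assoc, map_mul, Units.val_mul, map_inv, Units.inv_mul_eq_iff_eq_mul, map_mul, map_pow,
    Units.val_mul, Units.val_pow_eq_pow_val, burau_braidGen_zero, burau_braidGen_one, pow_succ',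
    ← mul_assoc, ← map_mul, burauX_mul_burauY, map_mul, map_mul, map_pow, mul_assoc]

lemma not_mem_upperTriangularModThree (k : ℕ) :
    !![0, 3; -1, 4] * burauY ^ k ∉ upperTriangularModThree := by
  have hY : (Int.castRingHom (ZMod 3)).mapMatrix burauY = diagonal ![1, 0] := by
    ext i j; fin_cases i <;> fin_cases j <;> rfl
  rw [upperTriangularModThree, Subsemiring.mem_comap, map_mul, map_pow, hY, diagonal_pow,
    mem_blockTriangularSubsemiring]
  intro h
  simpa using h (i := 1) (j := 0) (by decide)

theorem le_length_of_evalWord_eq_conj_mul_pow (k : ℕ) {w : List (ℕ × Bool)} (hw : ValidWord3 w)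
    (he : evalWord 3 w = (braidGen 3 1)⁻¹ * braidGen 3 0 * braidGen 3 1 ^ (k + 1)) :
    k + 3 ≤ w.length := by
  by_contra! hlen
  have hpos : ∀ l ∈ w, l.2 = true := by
    refine forall_mem_snd_of_length_lt (n := 3) w hw ?_
    simp [he, exponentSum_braidGen]
    omega
  obtain ⟨P, hP, hPw⟩ := burau_evalWord_mem_of_forall_pos fun l hl => ⟨hw l hl, hpos l hl⟩
  rw [he, burau_conj_mul_pow] at hPw
  exact not_mem_upperTriangularModThree k (Matrix.map_injective Int.cast_injective hPw ▸ hP)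

end BraidGroup

/-- in `B_3`, for every `k ≥ 0` the word `σ_2⁻¹ σ_1 σ_2 σ_2^k` is geodesic:
no word of length less than `k + 3` represents `σ_2⁻¹ σ_1 σ_2^{k+1}`. -/
theorem stmt19 (k : ℕ) :
    Geodesic3 ([B', A, B] ++ wpow [B] k) ∧
    ∀ w : List (ℕ × Bool), ValidWord3 w →
      evalWord 3 w = (braidGen 3 1)⁻¹ * braidGen 3 0 * (braidGen 3 1) ^ (k + 1) →
      k + 3 ≤ w.length := by
  have heval : evalWord 3 ([B', A, B] ++ wpow [B] k) =
      (braidGen 3 1)⁻¹ * braidGen 3 0 * braidGen 3 1 ^ (k + 1) := by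
    simp [wpow, B, B', A, evalWord, pow_succ', mul_assoc]
  refine ⟨fun w hw he => ?_, fun w hw he =>
    BraidGroup.le_length_of_evalWord_eq_conj_mul_pow k hw he⟩
  have hlen : ([B', A, B] ++ wpow [B] k).length = k + 3 := by simp [wpow]
  exact hlen ▸ BraidGroup.le_length_of_evalWord_eq_conj_mul_pow k hw (he.trans heval)
end
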